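/- arXiv:1006.3902 — 3 statements merged into one kernel-verified Lean document; each statement's English description precedes it below -/
import Mathlib

section
/- Let μ₁, μ₂ be finitely supported idempotent probability measures on X with representations μ_i(φ) = max_{1≤j≤n_i}(λ_{ij} + φ(x_{ij})) (i = 1, 2). If n₁ ≥ 2 and n₂ ≥ 2 (i.e., each support contains at least two points), then the set Λ(μ₁, μ₂) of couplings of μ₁ and μ₂ has cardinality at least that of the continuum. -/
/-!
A real matrix `w` with row maxima `λ₁` and column maxima `λ₂` yields the coupling
`φ ↦ max_{j,k} (w j k + φ (x₁ j, x₂ k))`, and distinct matrices yield distinct couplings because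
a continuous function can be made to vanish at one of the finitely many points `(x₁ j, x₂ k)`
and to be arbitrarily negative at the others. Start from `w j k = min (λ₁ j) (λ₂ k)` and lower
a single entry `(j₀, k₀)` by any `t ≥ 0`: the row and column maxima survive as long as `j₀` and
`k₀` avoid positions where `λ₁` and `λ₂` attain `0`, which two-point supports allow.
-/

open Filter Topology

variable {X : Type*}

/-- An idempotent probability measure on a topological space `X`:
a functional on `C(X, ℝ)` preserving constants, shifting by constants,
and turning pointwise max into max. -/
def IsIPM [TopologicalSpace X] (μ : C(X, ℝ) → ℝ) : Prop :=
  (∀ c : ℝ, μ (ContinuousMap.const X c) = c) ∧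
  (∀ (φ : C(X, ℝ)) (c : ℝ), μ (φ + ContinuousMap.const X c) = μ φ + c) ∧
  (∀ φ ψ : C(X, ℝ), μ (φ ⊔ ψ) = max (μ φ) (μ ψ))

/-- `μ` is represented as `μ(φ) = max_i (λ i + φ (x i))` with `x` pairwise distinct
and `max_i λ i = 0`. -/
def IsRepr [TopologicalSpace X] (μ : C(X, ℝ) → ℝ) {n : ℕ}
    (x : Fin n → X) (lam : Fin n → ℝ) : Prop :=
  0 < n ∧ Function.Injective x ∧ (⨆ i, lam i) = 0 ∧
    ∀ φ : C(X, ℝ), μ φ = ⨆ i, (lam i + φ (x i))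

/-- A finitely supported idempotent probability measure. -/
def IsFinSuppIPM [TopologicalSpace X] (μ : C(X, ℝ) → ℝ) : Prop :=
  ∃ (n : ℕ) (x : Fin n → X) (lam : Fin n → ℝ), IsRepr μ x lam

/-- `ξ` is a coupling of `μ1` and `μ2`: an idempotent probability measure on `X × X`
whose marginals are `μ1` and `μ2`. -/
def IsCoupling [TopologicalSpace X] (μ1 μ2 : C(X, ℝ) → ℝ)
    (ξ : C(X × X, ℝ) → ℝ) : Prop :=
  IsIPM ξ ∧
  (∀ φ : C(X, ℝ), ξ (φ.comp ContinuousMap.fst) = μ1 φ) ∧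
  (∀ φ : C(X, ℝ), ξ (φ.comp ContinuousMap.snd) = μ2 φ)

/-- A coupling matrix for weight vectors `lam1`, `lam2`: entries in `ℝ ∪ {−∞}`,
with row maxima `lam1` and column maxima `lam2`. -/
def IsCouplingMatrix {n1 n2 : ℕ} (lam1 : Fin n1 → ℝ) (lam2 : Fin n2 → ℝ)
    (γ : Fin n1 → Fin n2 → WithBot ℝ) : Prop :=
  (∀ j, (Finset.univ.sup fun k => γ j k) = (lam1 j : WithBot ℝ)) ∧
  (∀ k, (Finset.univ.sup fun j => γ j k) = (lam2 k : WithBot ℝ))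

/-- The cost `max{ |λ_{2k} − λ_{1j}| + ρ(x_{1j}, x_{2k}) : γ_{jk} ≠ −∞ }`. -/
noncomputable def matCost [MetricSpace X] {n1 n2 : ℕ}
    (x1 : Fin n1 → X) (lam1 : Fin n1 → ℝ) (x2 : Fin n2 → X) (lam2 : Fin n2 → ℝ)
    (γ : Fin n1 → Fin n2 → WithBot ℝ) : ℝ :=
  sSup {c : ℝ | ∃ j k, γ j k ≠ ⊥ ∧ c = |lam2 k - lam1 j| + dist (x1 j) (x2 k)}

/-- `H(μ1, μ2)`: the infimum of costs over all coupling matrices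
(for all representations of `μ1`, `μ2`; the representation is unique). -/
noncomputable def Hdist [MetricSpace X] (μ1 μ2 : C(X, ℝ) → ℝ) : ℝ :=
  sInf {c : ℝ | ∃ (n1 n2 : ℕ) (x1 : Fin n1 → X) (lam1 : Fin n1 → ℝ)
      (x2 : Fin n2 → X) (lam2 : Fin n2 → ℝ) (γ : Fin n1 → Fin n2 → WithBot ℝ),
      IsRepr μ1 x1 lam1 ∧ IsRepr μ2 x2 lam2 ∧ IsCouplingMatrix lam1 lam2 γ ∧
      c = matCost x1 lam1 x2 lam2 γ}

/-- `ρ_ω(μ1, μ2) = min{diam X, H(μ1, μ2)}`. -/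
noncomputable def rhoOmega [MetricSpace X] (μ1 μ2 : C(X, ℝ) → ℝ) : ℝ :=
  min (Metric.diam (Set.univ : Set X)) (Hdist μ1 μ2)

open Function

section MaxPlus

variable {ι κ : Type*} [TopologicalSpace X]

noncomputable def maxPlus (w : ι → ℝ) (y : ι → X) (φ : C(X, ℝ)) : ℝ :=
  ⨆ i, (w i + φ (y i))

theorem maxPlus_sup [Finite ι] (w : ι → ℝ) (y : ι → X) (φ ψ : C(X, ℝ)) :
    maxPlus w y (φ ⊔ ψ) = max (maxPlus w y φ) (maxPlus w y ψ) := by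
  simp only [maxPlus, ContinuousMap.sup_apply, ← max_add_add_left]
  exact ciSup_sup_eq (Finite.bddAbove_range _) (Finite.bddAbove_range _)

theorem maxPlus_add_const [Finite ι] [Nonempty ι] (w : ι → ℝ) (y : ι → X) (φ : C(X, ℝ))
    (c : ℝ) : maxPlus w y (φ + ContinuousMap.const X c) = maxPlus w y φ + c := by
  simp only [maxPlus, ContinuousMap.add_apply, ContinuousMap.const_apply, ← add_assoc]
  exact (ciSup_add (Finite.bddAbove_range _) c).symm

theorem maxPlus_const [Finite ι] [Nonempty ι] {w : ι → ℝ} (hw : ⨆ i, w i = 0) (y : ι → X)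
    (c : ℝ) : maxPlus w y (ContinuousMap.const X c) = c := by
  simp only [maxPlus, ContinuousMap.const_apply]
  rw [← ciSup_add (Finite.bddAbove_range _), hw, zero_add]

theorem isIPM_maxPlus [Finite ι] [Nonempty ι] {w : ι → ℝ} (hw : ⨆ i, w i = 0) (y : ι → X) :
    IsIPM (maxPlus w y) :=
  ⟨maxPlus_const hw y, maxPlus_add_const w y, maxPlus_sup w y⟩

theorem maxPlus_eq_of_forall_le [Finite ι] [Nonempty ι] {w : ι → ℝ} {y : ι → X} {φ : C(X, ℝ)}
    {i : ι} (h : ∀ j, w j + φ (y j) ≤ w i + φ (y i)) : maxPlus w y φ = w i + φ (y i) :=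
  le_antisymm (ciSup_le h) (Finite.le_ciSup (fun j => w j + φ (y j)) i)

theorem maxPlus_comp_fst [Finite ι] [Finite κ] [Nonempty κ] (w : ι × κ → ℝ) (y1 : ι → X)
    (y2 : κ → X) (φ : C(X, ℝ)) :
    maxPlus w (Prod.map y1 y2) (φ.comp ContinuousMap.fst)
      = maxPlus (fun i => ⨆ k, w (i, k)) y1 φ := by
  simp only [maxPlus, Finite.ciSup_prod, ContinuousMap.comp_apply, ContinuousMap.fst_apply,
    Prod.map_fst]
  exact iSup_congr fun i => (ciSup_add (Finite.bddAbove_range _) _).symm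

theorem maxPlus_comp_snd [Finite ι] [Nonempty ι] [Finite κ] (w : ι × κ → ℝ) (y1 : ι → X)
    (y2 : κ → X) (φ : C(X, ℝ)) :
    maxPlus w (Prod.map y1 y2) (φ.comp ContinuousMap.snd)
      = maxPlus (fun k => ⨆ i, w (i, k)) y2 φ := by
  simp only [maxPlus, ← (Equiv.prodComm κ ι).iSup_comp, Finite.ciSup_prod,
    ContinuousMap.comp_apply, ContinuousMap.snd_apply, Equiv.prodComm_apply, Prod.swap_prod_mk,
    Prod.map_snd]
  exact iSup_congr fun k => (ciSup_add (Finite.bddAbove_range _) _).symm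

theorem isCoupling_maxPlus [Finite ι] [Nonempty ι] [Finite κ] [Nonempty κ]
    {μ1 μ2 : C(X, ℝ) → ℝ} {lam1 : ι → ℝ} {lam2 : κ → ℝ} {y1 : ι → X} {y2 : κ → X}
    (hμ1 : μ1 = maxPlus lam1 y1) (hμ2 : μ2 = maxPlus lam2 y2)
    (hlam1 : ⨆ i, lam1 i = 0) {w : ι × κ → ℝ} (hrow : ∀ i, ⨆ k, w (i, k) = lam1 i)
    (hcol : ∀ k, ⨆ i, w (i, k) = lam2 k) :
    IsCoupling μ1 μ2 (maxPlus w (Prod.map y1 y2)) := by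
  have hw : ⨆ p, w p = 0 := by simp only [Finite.ciSup_prod, hrow, hlam1]
  refine ⟨isIPM_maxPlus hw _, fun φ => ?_, fun φ => ?_⟩
  · rw [maxPlus_comp_fst, funext hrow, hμ1]
  · rw [maxPlus_comp_snd, funext hcol, hμ2]

theorem maxPlus_injective [T35Space X] [Finite ι] {y : ι → X} (hy : Injective y) :
    Injective fun w : ι → ℝ => maxPlus w y := by
  intro w w' hww'
  funext i
  have : Nonempty ι := ⟨i⟩
  obtain ⟨f, hf, hfi, hfj⟩ := CompletelyRegularSpace.completely_regular (y i)
    (y '' {j | j ≠ i}) ((Set.toFinite _).image y).isClosed (fun ⟨j, hj, hji⟩ => hj (hy hji))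
  obtain ⟨M, hM⟩ := Finite.bddAbove_range fun j => max (w j - w i) (w' j - w' i)
  -- `-M * f` vanishes at `y i` and is steep enough elsewhere that both maxima are attained at `i`
  let φ : C(X, ℝ) := ⟨fun x => -M * f x, by fun_prop⟩
  have hφi : φ (y i) = 0 := by simp [φ, hfi]
  have key : ∀ v : ι → ℝ, (∀ j, v j - v i ≤ M) → maxPlus v y φ = v i := by
    intro v hv
    rw [maxPlus_eq_of_forall_le (i := i), hφi, add_zero]
    intro j
    rcases eq_or_ne j i with rfl | hji
    · rfl
    have : f (y j) = 1 := hfj ⟨j, hji, rfl⟩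
    simp only [φ, ContinuousMap.coe_mk, this, hφi, Set.Icc.coe_one]
    linarith [hv j]
  have hw := key w fun j => (le_max_left _ _).trans (hM ⟨j, rfl⟩)
  have hw' := key w' fun j => (le_max_right _ _).trans (hM ⟨j, rfl⟩)
  rw [← hw, ← hw', show maxPlus w y = maxPlus w' y from hww']

end MaxPlus

section LoweredMinWeights

variable {ι κ : Type*} [DecidableEq ι] [DecidableEq κ] (lam1 : ι → ℝ) (lam2 : κ → ℝ)
  (p0 : ι × κ)

def loweredMinWeights (t : ℝ) (p : ι × κ) : ℝ :=
  min (lam1 p.1) (lam2 p.2) - if p = p0 then t else 0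

variable {lam1 lam2 p0} {t : ℝ}

theorem loweredMinWeights_le (ht : 0 ≤ t) (p : ι × κ) :
    loweredMinWeights lam1 lam2 p0 t p ≤ min (lam1 p.1) (lam2 p.2) := by
  unfold loweredMinWeights
  split_ifs <;> linarith

theorem loweredMinWeights_of_ne {p : ι × κ} (hp : p ≠ p0) :
    loweredMinWeights lam1 lam2 p0 t p = min (lam1 p.1) (lam2 p.2) := by
  simp [loweredMinWeights, hp]

theorem iSup_loweredMinWeights_row [Finite κ] (ht : 0 ≤ t) {i : ι} {k : κ} (hk : k ≠ p0.2)
    (hik : lam1 i ≤ lam2 k) : ⨆ k', loweredMinWeights lam1 lam2 p0 t (i, k') = lam1 i := by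
  have : Nonempty κ := ⟨k⟩
  refine le_antisymm (ciSup_le fun k' => (loweredMinWeights_le ht _).trans (min_le_left _ _)) ?_
  refine Finite.le_ciSup_of_le k ?_
  rw [loweredMinWeights_of_ne (fun h => hk (congrArg Prod.snd h)), min_eq_left hik]

theorem iSup_loweredMinWeights_col [Finite ι] (ht : 0 ≤ t) {i : ι} {k : κ} (hi : i ≠ p0.1)
    (hik : lam2 k ≤ lam1 i) : ⨆ i', loweredMinWeights lam1 lam2 p0 t (i', k) = lam2 k := by
  have : Nonempty ι := ⟨i⟩
  refine le_antisymm (ciSup_le fun i' => (loweredMinWeights_le ht _).trans (min_le_right _ _)) ?_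
  refine Finite.le_ciSup_of_le i ?_
  rw [loweredMinWeights_of_ne (fun h => hi (congrArg Prod.fst h)), min_eq_right hik]

theorem loweredMinWeights_injective : Injective (loweredMinWeights lam1 lam2 p0) := by
  intro s t hst
  have := congrFun hst p0
  simp only [loweredMinWeights, if_true] at this
  linarith

end LoweredMinWeights

theorem stmt2_general [MetricSpace X]
    (μ1 μ2 : C(X, ℝ) → ℝ) {n1 n2 : ℕ}
    (x1 : Fin n1 → X) (lam1 : Fin n1 → ℝ) (x2 : Fin n2 → X) (lam2 : Fin n2 → ℝ)
    (h1 : IsRepr μ1 x1 lam1) (h2 : IsRepr μ2 x2 lam2)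
    (hn1 : 2 ≤ n1) (hn2 : 2 ≤ n2) :
    Cardinal.continuum ≤ Cardinal.mk {ξ : C(X × X, ℝ) → ℝ // IsCoupling μ1 μ2 ξ} := by
  obtain ⟨-, hx1, hlam1, hμ1⟩ := h1
  obtain ⟨-, hx2, hlam2, hμ2⟩ := h2
  have : Nonempty (Fin n1) := ⟨⟨0, by omega⟩⟩
  have : Nonempty (Fin n2) := ⟨⟨0, by omega⟩⟩
  obtain ⟨i1, hi1⟩ := exists_eq_ciSup_of_finite (f := lam1)
  obtain ⟨k1, hk1⟩ := exists_eq_ciSup_of_finite (f := lam2)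
  obtain ⟨i0, hi0⟩ := Fintype.exists_ne_of_one_lt_card (by simp; omega) i1
  obtain ⟨k0, hk0⟩ := Fintype.exists_ne_of_one_lt_card (by simp; omega) k1
  have hle1 (i : Fin n1) : lam1 i ≤ lam2 k1 := by
    rw [hk1, hlam2, ← hlam1]
    exact Finite.le_ciSup lam1 i
  have hle2 (k : Fin n2) : lam2 k ≤ lam1 i1 := by
    rw [hi1, hlam1, ← hlam2]
    exact Finite.le_ciSup lam2 k
  let ξ (t : Set.Ici (0 : ℝ)) : {ξ : C(X × X, ℝ) → ℝ // IsCoupling μ1 μ2 ξ} :=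
    ⟨maxPlus (loweredMinWeights lam1 lam2 (i0, k0) t) (Prod.map x1 x2),
      isCoupling_maxPlus (funext hμ1) (funext hμ2) hlam1
        (fun i => iSup_loweredMinWeights_row t.2 hk0.symm (hle1 i))
        (fun k => iSup_loweredMinWeights_col t.2 hi0.symm (hle2 k))⟩
  have hξ : Injective ξ := fun s t hst => Subtype.ext <| loweredMinWeights_injective <|
    maxPlus_injective (hx1.prodMap hx2) (congrArg Subtype.val hst)
  simpa [Cardinal.mk_Ici_real] using Cardinal.lift_mk_le'.mpr ⟨⟨ξ, hξ⟩⟩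

/-- if each support has at least two points, the set of couplings
has cardinality at least the continuum. -/
theorem stmt2 [MetricSpace X] [CompactSpace X]
    (μ1 μ2 : C(X, ℝ) → ℝ) {n1 n2 : ℕ}
    (x1 : Fin n1 → X) (lam1 : Fin n1 → ℝ) (x2 : Fin n2 → X) (lam2 : Fin n2 → ℝ)
    (h1 : IsRepr μ1 x1 lam1) (h2 : IsRepr μ2 x2 lam2)
    (hn1 : 2 ≤ n1) (hn2 : 2 ≤ n2) :
    Cardinal.continuum ≤ Cardinal.mk {ξ : C(X × X, ℝ) → ℝ // IsCoupling μ1 μ2 ξ} :=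
  stmt2_general μ1 μ2 x1 lam1 x2 lam2 h1 h2 hn1 hn2
end

section
/- (Lemma 1) For any pair μ₁, μ₂ of finitely supported idempotent probability measures on X, the infimum defining H(μ₁, μ₂) is attained: there exists a coupling matrix (γ_{jk}) for μ₁, μ₂ such that H(μ₁, μ₂) = max{ |λ_{2k} − λ_{1j}| + ρ(x_{1j}, x_{2k}) : γ_{jk} ≠ −∞ }. -/
open Filter Topology

variable {X : Type*}

lemma repr_sub [MetricSpace X] {μ : C(X, ℝ) → ℝ} {n n' : ℕ}
    {x : Fin n → X} {lam : Fin n → ℝ} {x' : Fin n' → X} {lam' : Fin n' → ℝ}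
    (h : IsRepr μ x lam) (h' : IsRepr μ x' lam') (i : Fin n) :
    ∃ k, x' k = x i ∧ lam' k = lam i := by
  obtain ⟨hn, hinj, hsup, hrep⟩ := h
  obtain ⟨hn', hinj', hsup', hrep'⟩ := h'
  haveI : Nonempty (Fin n) := ⟨⟨0, hn⟩⟩
  haveI : Nonempty (Fin n') := ⟨⟨0, hn'⟩⟩
  set m : X → ℝ := fun y => min 1 (dist y (x i)) with hm
  have hm0 : m (x i) = 0 := by simp [hm]
  have hmnn : ∀ y, 0 ≤ m y := fun y => le_min zero_le_one dist_nonneg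
  have hmpos : ∀ y, y ≠ x i → 0 < m y := fun y hy => lt_min one_pos (dist_pos.mpr hy)
  set C : ℝ := max 0 (max
      (Finset.univ.sup' Finset.univ_nonempty fun j => (lam j - lam i + 1) / m (x j))
      (Finset.univ.sup' Finset.univ_nonempty fun k => (lam' k - lam i + 1) / m (x' k))) with hC
  have key : ∀ (p : X) (l : ℝ), p ≠ x i → (l - lam i + 1) / m p ≤ C →
      l - C * m p ≤ lam i - 1 := by
    intro p l hp hle
    have hmp := hmpos p hp
    have h2 : (l - lam i + 1) ≤ C * m p := by
      have := mul_le_mul_of_nonneg_right hle (hmnn p)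
      rwa [div_mul_cancel₀ _ (ne_of_gt hmp)] at this
    linarith
  set φ : C(X, ℝ) := ⟨fun y => -C * m y,
    (continuous_const.mul (continuous_const.min (continuous_id.dist continuous_const)))⟩ with hφ
  have hφi : φ (x i) = 0 := by simp [hφ, hm0]
  have hφv : ∀ y, φ y = -(C * m y) := fun y => by simp [hφ, hm]
  have hub : ∀ j : Fin n, lam j + φ (x j) ≤ lam i := by
    intro j
    by_cases hji : j = i
    · subst hji; rw [hφi]; simp
    · have hxj : x j ≠ x i := fun hcontra => hji (hinj hcontra)
      have hle : (lam j - lam i + 1) / m (x j) ≤ C :=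
        le_trans (Finset.le_sup' (f := fun j => (lam j - lam i + 1) / m (x j)) (Finset.mem_univ j))
          (le_trans (le_max_left _ _) (le_max_right _ _))
      have := key (x j) (lam j) hxj hle
      rw [hφv]; linarith
  have hμ : μ φ = lam i := by
    rw [hrep]
    apply le_antisymm
    · exact ciSup_le hub
    · have := le_ciSup (f := fun j => lam j + φ (x j))
        (Set.Finite.bddAbove (Set.finite_range _)) i
      simpa [hφi] using this
  obtain ⟨k, hk⟩ := Finite.exists_max (fun k => lam' k + φ (x' k))
  have hksup : (⨆ k, lam' k + φ (x' k)) = lam' k + φ (x' k) :=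
    le_antisymm (ciSup_le hk) (le_ciSup (f := fun k => lam' k + φ (x' k)) (Set.Finite.bddAbove (Set.finite_range _)) k)
  have heq : lam' k + φ (x' k) = lam i := by rw [← hksup, ← hrep', hμ]
  by_cases hxk : x' k = x i
  · refine ⟨k, hxk, ?_⟩
    rw [hxk, hφi] at heq; linarith
  · exfalso
    have hle : (lam' k - lam i + 1) / m (x' k) ≤ C :=
      le_trans (Finset.le_sup' (f := fun k => (lam' k - lam i + 1) / m (x' k)) (Finset.mem_univ k))
        (le_trans (le_max_right _ _) (le_max_right _ _))
    have := key (x' k) (lam' k) hxk hle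
    rw [hφv] at heq; linarith

lemma repr_unique [MetricSpace X] {μ : C(X, ℝ) → ℝ} {n n' : ℕ}
    {x : Fin n → X} {lam : Fin n → ℝ} {x' : Fin n' → X} {lam' : Fin n' → ℝ}
    (h : IsRepr μ x lam) (h' : IsRepr μ x' lam') :
    ∃ e : Fin n ≃ Fin n', (∀ i, x' (e i) = x i) ∧ (∀ i, lam' (e i) = lam i) := by
  choose f hf1 hf2 using repr_sub h h'
  choose g hg1 hg2 using repr_sub h' h
  refine ⟨⟨f, g, fun i => h.2.1 ?_, fun k => h'.2.1 ?_⟩, hf1, hf2⟩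
  · rw [hg1, hf1]
  · rw [hf1, hg1]

-- sup over composition with an equiv
lemma sup_comp_equiv {α β γ : Type*} [SemilatticeSup γ] [OrderBot γ]
    [Fintype α] [Fintype β] (e : α ≃ β) (f : β → γ) :
    (Finset.univ.sup fun a => f (e a)) = Finset.univ.sup f := by
  apply le_antisymm
  · exact Finset.sup_le fun a _ => Finset.le_sup (Finset.mem_univ _)
  · refine Finset.sup_le fun b _ => ?_
    have := Finset.le_sup (f := fun a => f (e a)) (Finset.mem_univ (e.symm b))
    simpa using this

-- lam values are ≤ 0 and 0 is attained
lemma repr_lam_le [TopologicalSpace X] {μ : C(X, ℝ) → ℝ} {n : ℕ}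
    {x : Fin n → X} {lam : Fin n → ℝ} (h : IsRepr μ x lam) (i : Fin n) :
    lam i ≤ 0 := by
  haveI : Nonempty (Fin n) := ⟨⟨0, h.1⟩⟩
  have := le_ciSup (f := lam) (Set.Finite.bddAbove (Set.finite_range _)) i
  rw [h.2.2.1] at this; exact this

lemma repr_lam_zero [TopologicalSpace X] {μ : C(X, ℝ) → ℝ} {n : ℕ}
    {x : Fin n → X} {lam : Fin n → ℝ} (h : IsRepr μ x lam) :
    ∃ i, lam i = 0 := by
  haveI : Nonempty (Fin n) := ⟨⟨0, h.1⟩⟩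
  obtain ⟨i, hi⟩ := Finite.exists_max lam
  refine ⟨i, le_antisymm (repr_lam_le h i) ?_⟩
  have : (⨆ j, lam j) ≤ lam i := ciSup_le hi
  rw [h.2.2.1] at this; exact this

-- transport of a coupling matrix along equivalences of representations
lemma coupling_transport {n1 n2 n1' n2' : ℕ}
    {lam1 : Fin n1 → ℝ} {lam2 : Fin n2 → ℝ}
    {lam1' : Fin n1' → ℝ} {lam2' : Fin n2' → ℝ}
    (e1 : Fin n1 ≃ Fin n1') (e2 : Fin n2 ≃ Fin n2')
    (hl1 : ∀ j, lam1' (e1 j) = lam1 j) (hl2 : ∀ k, lam2' (e2 k) = lam2 k)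
    {γ : Fin n1' → Fin n2' → WithBot ℝ} (hγ : IsCouplingMatrix lam1' lam2' γ) :
    IsCouplingMatrix lam1 lam2 (fun j k => γ (e1 j) (e2 k)) := by
  constructor
  · intro j
    rw [sup_comp_equiv e2 (fun k' => γ (e1 j) k'), hγ.1, hl1]
  · intro k
    rw [sup_comp_equiv e1 (fun j' => γ j' (e2 k)), hγ.2, hl2]

lemma cost_transport [MetricSpace X] {n1 n2 n1' n2' : ℕ}
    {x1 : Fin n1 → X} {lam1 : Fin n1 → ℝ} {x2 : Fin n2 → X} {lam2 : Fin n2 → ℝ}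
    {x1' : Fin n1' → X} {lam1' : Fin n1' → ℝ} {x2' : Fin n2' → X} {lam2' : Fin n2' → ℝ}
    (e1 : Fin n1 ≃ Fin n1') (e2 : Fin n2 ≃ Fin n2')
    (hx1 : ∀ j, x1' (e1 j) = x1 j) (hl1 : ∀ j, lam1' (e1 j) = lam1 j)
    (hx2 : ∀ k, x2' (e2 k) = x2 k) (hl2 : ∀ k, lam2' (e2 k) = lam2 k)
    (γ : Fin n1' → Fin n2' → WithBot ℝ) :
    matCost x1 lam1 x2 lam2 (fun j k => γ (e1 j) (e2 k))
      = matCost x1' lam1' x2' lam2' γ := by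
  unfold matCost
  congr 1
  ext c
  constructor
  · rintro ⟨j, k, hne, rfl⟩
    exact ⟨e1 j, e2 k, hne, by rw [hx1, hl1, hx2, hl2]⟩
  · rintro ⟨j', k', hne, rfl⟩
    refine ⟨e1.symm j', e2.symm k', by simpa using hne, ?_⟩
    rw [← hx1 (e1.symm j'), ← hl1 (e1.symm j'), ← hx2 (e2.symm k'), ← hl2 (e2.symm k')]
    simp

open Classical in
-- cost depends only on the support
noncomputable def suppCost [MetricSpace X] {n1 n2 : ℕ}
    (x1 : Fin n1 → X) (lam1 : Fin n1 → ℝ) (x2 : Fin n2 → X) (lam2 : Fin n2 → ℝ)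
    (b : Fin n1 → Fin n2 → Bool) : ℝ :=
  sSup {c : ℝ | ∃ j k, b j k = true ∧ c = |lam2 k - lam1 j| + dist (x1 j) (x2 k)}

open Classical in
lemma matCost_eq_suppCost [MetricSpace X] {n1 n2 : ℕ}
    (x1 : Fin n1 → X) (lam1 : Fin n1 → ℝ) (x2 : Fin n2 → X) (lam2 : Fin n2 → ℝ)
    (γ : Fin n1 → Fin n2 → WithBot ℝ) :
    matCost x1 lam1 x2 lam2 γ
      = suppCost x1 lam1 x2 lam2 (fun j k => decide (γ j k ≠ ⊥)) := by
  unfold matCost suppCost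
  congr 1
  ext c
  simp [decide_eq_true_eq]

/-- Lemma 1: the infimum defining `H(μ₁, μ₂)` is attained by some
coupling matrix. -/
theorem stmt3 [MetricSpace X] [CompactSpace X]
    (μ1 μ2 : C(X, ℝ) → ℝ) {n1 n2 : ℕ}
    (x1 : Fin n1 → X) (lam1 : Fin n1 → ℝ) (x2 : Fin n2 → X) (lam2 : Fin n2 → ℝ)
    (h1 : IsRepr μ1 x1 lam1) (h2 : IsRepr μ2 x2 lam2) :
    ∃ γ : Fin n1 → Fin n2 → WithBot ℝ, IsCouplingMatrix lam1 lam2 γ ∧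
      Hdist μ1 μ2 = matCost x1 lam1 x2 lam2 γ := by
  classical
  haveI : Nonempty (Fin n1) := ⟨⟨0, h1.1⟩⟩
  haveI : Nonempty (Fin n2) := ⟨⟨0, h2.1⟩⟩
  set Crep : Set ℝ := {c | ∃ γ : Fin n1 → Fin n2 → WithBot ℝ,
      IsCouplingMatrix lam1 lam2 γ ∧ c = matCost x1 lam1 x2 lam2 γ} with hCrep
  have hset : {c : ℝ | ∃ (m1 m2 : ℕ) (y1 : Fin m1 → X) (mu1 : Fin m1 → ℝ)
      (y2 : Fin m2 → X) (mu2 : Fin m2 → ℝ) (γ : Fin m1 → Fin m2 → WithBot ℝ),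
      IsRepr μ1 y1 mu1 ∧ IsRepr μ2 y2 mu2 ∧ IsCouplingMatrix mu1 mu2 γ ∧
      c = matCost y1 mu1 y2 mu2 γ} = Crep := by
    ext c
    constructor
    · rintro ⟨m1, m2, y1, mu1, y2, mu2, γ, hr1, hr2, hγ, rfl⟩
      obtain ⟨e1, he1x, he1l⟩ := repr_unique h1 hr1
      obtain ⟨e2, he2x, he2l⟩ := repr_unique h2 hr2
      exact ⟨fun j k => γ (e1 j) (e2 k),
        coupling_transport e1 e2 he1l he2l hγ,
        (cost_transport e1 e2 he1x he1l he2x he2l γ).symm⟩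
    · rintro ⟨γ, hγ, rfl⟩
      exact ⟨n1, n2, x1, lam1, x2, lam2, γ, h1, h2, hγ, rfl⟩
  have hne : Crep.Nonempty := by
    obtain ⟨j0, hj0⟩ := repr_lam_zero h1
    obtain ⟨k0, hk0⟩ := repr_lam_zero h2
    refine ⟨_, ⟨fun j k => ((min (lam1 j) (lam2 k) : ℝ) : WithBot ℝ), ⟨?_, ?_⟩, rfl⟩⟩
    · intro j
      apply le_antisymm
      · exact Finset.sup_le fun k _ => WithBot.coe_le_coe.mpr (min_le_left _ _)
      · have hmin : ((min (lam1 j) (lam2 k0) : ℝ) : WithBot ℝ) = (lam1 j : WithBot ℝ) := by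
          rw [hk0, min_eq_left (repr_lam_le h1 j)]
        calc (lam1 j : WithBot ℝ) = _ := hmin.symm
          _ ≤ _ := Finset.le_sup
              (f := fun k => ((min (lam1 j) (lam2 k) : ℝ) : WithBot ℝ))
              (Finset.mem_univ k0)
    · intro k
      apply le_antisymm
      · exact Finset.sup_le fun j _ => WithBot.coe_le_coe.mpr (min_le_right _ _)
      · have hmin : ((min (lam1 j0) (lam2 k) : ℝ) : WithBot ℝ) = (lam2 k : WithBot ℝ) := by
          rw [hj0, min_eq_right (repr_lam_le h2 k)]
        calc (lam2 k : WithBot ℝ) = _ := hmin.symm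
          _ ≤ _ := Finset.le_sup
              (f := fun j => ((min (lam1 j) (lam2 k) : ℝ) : WithBot ℝ))
              (Finset.mem_univ j0)
  have hfin : Crep.Finite := by
    apply Set.Finite.subset (Set.finite_range (suppCost x1 lam1 x2 lam2))
    rintro c ⟨γ, hγ, rfl⟩
    exact ⟨fun j k => decide (γ j k ≠ ⊥),
      (matCost_eq_suppCost x1 lam1 x2 lam2 γ).symm⟩
  have hmem : sInf Crep ∈ Crep := hne.csInf_mem hfin
  obtain ⟨γ, hγ, hc⟩ := hmem
  refine ⟨γ, hγ, ?_⟩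
  unfold Hdist
  rw [hset]
  exact hc
end

section
/- (Proposition 1) The function H is a metric on the set I_ω(X) of finitely supported idempotent probability measures on X: for all μ₁, μ₂, μ₃ ∈ I_ω(X), H(μ₁, μ₂) ≥ 0; H(μ₁, μ₂) = 0 if and only if μ₁ = μ₂; H(μ₁, μ₂) = H(μ₂, μ₁); and H(μ₁, μ₃) ≤ H(μ₁, μ₂) + H(μ₂, μ₃). -/
open Filter Topology

variable {X : Type*}

section Auxiliary

variable {n m n1 n2 n3 : ℕ}

/-! ### Basic facts about representations -/

lemma isRepr_term_le [MetricSpace X] {μ : C(X, ℝ) → ℝ} {x : Fin n → X} {lam : Fin n → ℝ}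
    (h : IsRepr μ x lam) (φ : C(X, ℝ)) (j : Fin n) : lam j + φ (x j) ≤ μ φ := by
  rw [h.2.2.2 φ]
  exact le_ciSup (f := fun i => lam i + φ (x i)) (Set.Finite.bddAbove (Set.finite_range _)) j

lemma isRepr_le [MetricSpace X] {μ : C(X, ℝ) → ℝ} {x : Fin n → X} {lam : Fin n → ℝ}
    (h : IsRepr μ x lam) {φ : C(X, ℝ)} {c : ℝ}
    (hb : ∀ j, lam j + φ (x j) ≤ c) : μ φ ≤ c := by
  haveI : Nonempty (Fin n) := Fin.pos_iff_nonempty.mp h.1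
  rw [h.2.2.2 φ]
  exact ciSup_le hb

lemma isRepr_lam_nonpos [MetricSpace X] {μ : C(X, ℝ) → ℝ} {x : Fin n → X} {lam : Fin n → ℝ}
    (h : IsRepr μ x lam) (j : Fin n) : lam j ≤ 0 := by
  haveI : Nonempty (Fin n) := Fin.pos_iff_nonempty.mp h.1
  calc lam j ≤ ⨆ i, lam i := le_ciSup (Set.Finite.bddAbove (Set.finite_range _)) j
  _ = 0 := h.2.2.1

lemma isRepr_exists_lam_zero [MetricSpace X] {μ : C(X, ℝ) → ℝ} {x : Fin n → X}
    {lam : Fin n → ℝ} (h : IsRepr μ x lam) : ∃ j, lam j = 0 := by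
  haveI : Nonempty (Fin n) := Fin.pos_iff_nonempty.mp h.1
  obtain ⟨j, -, hj⟩ := Finset.exists_mem_eq_sup' Finset.univ_nonempty lam
  refine ⟨j, ?_⟩
  rw [← hj, Finset.sup'_univ_eq_ciSup, h.2.2.1]

/-- Matching lemma (uniqueness of the representation): any two representations of the
same functional have the same supported points with the same weights. -/
lemma isRepr_match [MetricSpace X] {μ : C(X, ℝ) → ℝ} {x : Fin n → X} {lam : Fin n → ℝ}
    {y : Fin m → X} {mu : Fin m → ℝ}
    (h1 : IsRepr μ x lam) (h2 : IsRepr μ y mu) (j0 : Fin n) :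
    ∃ k, y k = x j0 ∧ mu k = lam j0 := by
  classical
  haveI : Nonempty (Fin n) := Fin.pos_iff_nonempty.mp h1.1
  haveI : Nonempty (Fin m) := Fin.pos_iff_nonempty.mp h2.1
  set B : ℝ := 1 + (Finset.univ.sup' Finset.univ_nonempty fun j => |lam j|) +
      (Finset.univ.sup' Finset.univ_nonempty fun k => |mu k|) with hB
  have hBlam : ∀ j, |lam j| < B := by
    intro j
    have h1' : |lam j| ≤ Finset.univ.sup' Finset.univ_nonempty fun j => |lam j| :=
      Finset.le_sup' (fun j => |lam j|) (Finset.mem_univ j)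
    have h2' : (0:ℝ) ≤ |mu (Classical.arbitrary _)| := abs_nonneg _
    have h3' : |mu (Classical.arbitrary _)| ≤
        Finset.univ.sup' Finset.univ_nonempty fun k => |mu k| :=
      Finset.le_sup' (fun k => |mu k|) (Finset.mem_univ _)
    rw [hB]; linarith
  have hBmu : ∀ k, |mu k| < B := by
    intro k
    have h1' : |mu k| ≤ Finset.univ.sup' Finset.univ_nonempty fun k => |mu k| :=
      Finset.le_sup' (fun k => |mu k|) (Finset.mem_univ k)
    have h2' : (0:ℝ) ≤ |lam (Classical.arbitrary _)| := abs_nonneg _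
    have h3' : |lam (Classical.arbitrary _)| ≤
        Finset.univ.sup' Finset.univ_nonempty fun j => |lam j| :=
      Finset.le_sup' (fun j => |lam j|) (Finset.mem_univ _)
    rw [hB]; linarith
  have hB0 : 0 < B := lt_of_le_of_lt (abs_nonneg _) (hBlam (Classical.arbitrary _))
  set g1 : Fin n → ℝ := fun j => if x j = x j0 then 1 else dist (x j) (x j0) with hg1
  set g2 : Fin m → ℝ := fun k => if y k = x j0 then 1 else dist (y k) (x j0) with hg2
  set δ : ℝ := min (Finset.univ.inf' Finset.univ_nonempty g1)
      (Finset.univ.inf' Finset.univ_nonempty g2) with hδ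
  have hδpos : 0 < δ := by
    rw [hδ]
    apply lt_min
    · apply Finset.lt_inf'_iff .. |>.mpr
      intro j _
      rw [hg1]
      dsimp only
      split
      · norm_num
      · next hne => exact dist_pos.mpr (fun h => hne (by rw [h]))
    · apply Finset.lt_inf'_iff .. |>.mpr
      intro k _
      rw [hg2]
      dsimp only
      split
      · norm_num
      · next hne => exact dist_pos.mpr (fun h => hne (by rw [h]))
  have hδ1 : ∀ j, x j ≠ x j0 → δ ≤ dist (x j) (x j0) := by
    intro j hj
    have := Finset.inf'_le g1 (Finset.mem_univ j)
    rw [hg1] at this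
    simp only [if_neg hj] at this
    exact le_trans (min_le_left _ _) this
  have hδ2 : ∀ k, y k ≠ x j0 → δ ≤ dist (y k) (x j0) := by
    intro k hk
    have := Finset.inf'_le g2 (Finset.mem_univ k)
    rw [hg2] at this
    simp only [if_neg hk] at this
    exact le_trans (min_le_right _ _) this
  set t : ℝ := B / δ with ht
  have htδ : t * δ = B := div_mul_cancel₀ _ (ne_of_gt hδpos)
  have ht0 : 0 ≤ t := le_of_lt (div_pos hB0 hδpos)
  set φ : C(X, ℝ) := ⟨fun z => -t * dist z (x j0),
    (continuous_const.mul (continuous_id.dist continuous_const))⟩ with hφ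
  have hφval : ∀ z, φ z = -t * dist z (x j0) := fun z => rfl
  have hφ0 : φ (x j0) = 0 := by rw [hφval, dist_self, mul_zero]
  have hfar : ∀ z, z ≠ x j0 → δ ≤ dist z (x j0) → φ z ≤ -B := by
    intro z hz hd
    rw [hφval]
    have : t * δ ≤ t * dist z (x j0) := mul_le_mul_of_nonneg_left hd ht0
    rw [htδ] at this
    linarith
  have hμφ : μ φ = lam j0 := by
    apply le_antisymm
    · apply isRepr_le h1
      intro j
      by_cases hj : x j = x j0
      · have : j = j0 := h1.2.1 hj
        subst this
        rw [hj, hφ0, add_zero]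
      · have h1' : φ (x j) ≤ -B := hfar _ hj (hδ1 j hj)
        have h2' : lam j ≤ 0 := isRepr_lam_nonpos h1 j
        have h3' : -B < lam j0 := (abs_lt.mp (hBlam j0)).1
        linarith
    · have := isRepr_term_le h1 φ j0
      rwa [hφ0, add_zero] at this
  have hek : ∃ k, y k = x j0 := by
    by_contra hc
    push_neg at hc
    have hle : μ φ ≤ -B + 0 := by
      apply isRepr_le h2
      intro k
      have h1' : φ (y k) ≤ -B := hfar _ (hc k) (hδ2 k (hc k))
      have h2' : mu k ≤ 0 := isRepr_lam_nonpos h2 k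
      linarith
    rw [hμφ] at hle
    have h3' : -B < lam j0 := (abs_lt.mp (hBlam j0)).1
    linarith
  obtain ⟨k, hk⟩ := hek
  refine ⟨k, hk, ?_⟩
  have hμφ2 : μ φ = mu k := by
    apply le_antisymm
    · apply isRepr_le h2
      intro k'
      by_cases hk' : y k' = x j0
      · have : k' = k := h2.2.1 (hk'.trans hk.symm)
        subst this
        rw [hk', ← hk.symm] at *
        rw [hk] at hφ0 ⊢
        rw [hφ0, add_zero]
      · have h1' : φ (y k') ≤ -B := hfar _ hk' (hδ2 k' hk')
        have h2' : mu k' ≤ 0 := isRepr_lam_nonpos h2 k'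
        have h3' : -B < mu k := (abs_lt.mp (hBmu k)).1
        linarith
    · have := isRepr_term_le h2 φ k
      rw [hk, hφ0, add_zero] at this
      exact this
  rw [← hμφ2, hμφ]

/-! ### Basic facts about coupling matrices and costs -/

lemma matCost_set_finite [MetricSpace X] {x1 : Fin n1 → X} {lam1 : Fin n1 → ℝ}
    {x2 : Fin n2 → X} {lam2 : Fin n2 → ℝ} (γ : Fin n1 → Fin n2 → WithBot ℝ) :
    {c : ℝ | ∃ j k, γ j k ≠ ⊥ ∧ c = |lam2 k - lam1 j| + dist (x1 j) (x2 k)}.Finite := by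
  apply Set.Finite.subset (Set.finite_range
    (fun p : Fin n1 × Fin n2 => |lam2 p.2 - lam1 p.1| + dist (x1 p.1) (x2 p.2)))
  rintro c ⟨j, k, -, rfl⟩
  exact ⟨(j, k), rfl⟩

lemma pair_le_matCost [MetricSpace X] {x1 : Fin n1 → X} {lam1 : Fin n1 → ℝ}
    {x2 : Fin n2 → X} {lam2 : Fin n2 → ℝ} {γ : Fin n1 → Fin n2 → WithBot ℝ}
    {j : Fin n1} {k : Fin n2} (hjk : γ j k ≠ ⊥) :
    |lam2 k - lam1 j| + dist (x1 j) (x2 k) ≤ matCost x1 lam1 x2 lam2 γ :=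
  le_csSup (matCost_set_finite γ).bddAbove ⟨j, k, hjk, rfl⟩

lemma cm_row_ne_bot {lam1 : Fin n1 → ℝ} {lam2 : Fin n2 → ℝ}
    {γ : Fin n1 → Fin n2 → WithBot ℝ} (hcm : IsCouplingMatrix lam1 lam2 γ)
    (j : Fin n1) : ∃ k, γ j k ≠ ⊥ := by
  by_contra hc
  push_neg at hc
  have h := hcm.1 j
  rw [(Finset.sup_eq_bot_iff _ _).mpr (fun k _ => hc k)] at h
  exact WithBot.coe_ne_bot h.symm

lemma cm_col_ne_bot {lam1 : Fin n1 → ℝ} {lam2 : Fin n2 → ℝ}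
    {γ : Fin n1 → Fin n2 → WithBot ℝ} (hcm : IsCouplingMatrix lam1 lam2 γ)
    (k : Fin n2) : ∃ j, γ j k ≠ ⊥ := by
  by_contra hc
  push_neg at hc
  have h := hcm.2 k
  rw [(Finset.sup_eq_bot_iff _ _).mpr (fun j _ => hc j)] at h
  exact WithBot.coe_ne_bot h.symm

lemma cm_entry_le_row {lam1 : Fin n1 → ℝ} {lam2 : Fin n2 → ℝ}
    {γ : Fin n1 → Fin n2 → WithBot ℝ} (hcm : IsCouplingMatrix lam1 lam2 γ)
    (j : Fin n1) (k : Fin n2) : γ j k ≤ (lam1 j : WithBot ℝ) := by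
  rw [← hcm.1 j]
  exact Finset.le_sup (f := fun k => γ j k) (Finset.mem_univ k)

lemma cm_entry_le_col {lam1 : Fin n1 → ℝ} {lam2 : Fin n2 → ℝ}
    {γ : Fin n1 → Fin n2 → WithBot ℝ} (hcm : IsCouplingMatrix lam1 lam2 γ)
    (j : Fin n1) (k : Fin n2) : γ j k ≤ (lam2 k : WithBot ℝ) := by
  rw [← hcm.2 k]
  exact Finset.le_sup (f := fun j => γ j k) (Finset.mem_univ j)

lemma matCost_nonneg [MetricSpace X] {x1 : Fin n1 → X} {lam1 : Fin n1 → ℝ}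
    {x2 : Fin n2 → X} {lam2 : Fin n2 → ℝ} {γ : Fin n1 → Fin n2 → WithBot ℝ}
    (hcm : IsCouplingMatrix lam1 lam2 γ) (hn : 0 < n1) :
    0 ≤ matCost x1 lam1 x2 lam2 γ := by
  obtain ⟨k, hk⟩ := cm_row_ne_bot hcm ⟨0, hn⟩
  exact le_trans (by positivity) (pair_le_matCost hk)

/-- The product coupling matrix. -/
lemma cm_prod {lam1 : Fin n1 → ℝ} {lam2 : Fin n2 → ℝ}
    (h1 : ∃ j, lam1 j = 0) (h2 : ∃ k, lam2 k = 0)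
    (h1' : ∀ j, lam1 j ≤ 0) (h2' : ∀ k, lam2 k ≤ 0) :
    IsCouplingMatrix lam1 lam2 (fun j k => ((lam1 j + lam2 k : ℝ) : WithBot ℝ)) := by
  constructor
  · intro j
    apply le_antisymm
    · apply Finset.sup_le
      intro k _
      dsimp only
      exact WithBot.coe_le_coe.mpr (by linarith [h2' k])
    · obtain ⟨k0, hk0⟩ := h2
      have : ((lam1 j + lam2 k0 : ℝ) : WithBot ℝ) = (lam1 j : WithBot ℝ) := by
        rw [hk0, add_zero]
      rw [← this]
      exact Finset.le_sup (f := fun k => ((lam1 j + lam2 k : ℝ) : WithBot ℝ))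
        (Finset.mem_univ k0)
  · intro k
    apply le_antisymm
    · apply Finset.sup_le
      intro j _
      dsimp only
      exact WithBot.coe_le_coe.mpr (by linarith [h1' j])
    · obtain ⟨j0, hj0⟩ := h1
      have : ((lam1 j0 + lam2 k : ℝ) : WithBot ℝ) = (lam2 k : WithBot ℝ) := by
        rw [hj0, zero_add]
      rw [← this]
      exact Finset.le_sup (f := fun j => ((lam1 j + lam2 k : ℝ) : WithBot ℝ))
        (Finset.mem_univ j0)

/-- The transpose of a coupling matrix. -/
lemma cm_transpose {lam1 : Fin n1 → ℝ} {lam2 : Fin n2 → ℝ}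
    {γ : Fin n1 → Fin n2 → WithBot ℝ} (hcm : IsCouplingMatrix lam1 lam2 γ) :
    IsCouplingMatrix lam2 lam1 (fun k j => γ j k) :=
  ⟨hcm.2, hcm.1⟩

lemma matCost_transpose [MetricSpace X] {x1 : Fin n1 → X} {lam1 : Fin n1 → ℝ}
    {x2 : Fin n2 → X} {lam2 : Fin n2 → ℝ} (γ : Fin n1 → Fin n2 → WithBot ℝ) :
    matCost x2 lam2 x1 lam1 (fun k j => γ j k) = matCost x1 lam1 x2 lam2 γ := by
  unfold matCost
  congr 1
  ext c
  constructor
  · rintro ⟨k, j, h, rfl⟩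
    exact ⟨j, k, h, by rw [abs_sub_comm, dist_comm]⟩
  · rintro ⟨j, k, h, rfl⟩
    exact ⟨k, j, h, by rw [abs_sub_comm, dist_comm]⟩

/-- Composition (max-plus with `min`) of coupling matrices. -/
lemma cm_comp {lam1 : Fin n1 → ℝ} {lam2 : Fin n2 → ℝ} {lam3 : Fin n3 → ℝ}
    {γ : Fin n1 → Fin n2 → WithBot ℝ} {δ : Fin n2 → Fin n3 → WithBot ℝ}
    (hγ : IsCouplingMatrix lam1 lam2 γ) (hδ : IsCouplingMatrix lam2 lam3 δ) :
    IsCouplingMatrix lam1 lam3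
      (fun j l => Finset.univ.sup fun k => γ j k ⊓ δ k l) := by
  constructor
  · intro j
    rw [Finset.sup_comm]
    calc (Finset.univ.sup fun k => Finset.univ.sup fun l => γ j k ⊓ δ k l)
        = Finset.univ.sup fun k => γ j k ⊓ Finset.univ.sup fun l => δ k l := by
          apply Finset.sup_congr rfl
          intro k _
          exact (Finset.sup_inf_distrib_left _ _ _).symm
      _ = Finset.univ.sup fun k => γ j k := by
          apply Finset.sup_congr rfl
          intro k _
          rw [hδ.1 k]
          exact inf_eq_left.mpr (cm_entry_le_col hγ j k)
      _ = (lam1 j : WithBot ℝ) := hγ.1 j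
  · intro l
    calc (Finset.univ.sup fun j => Finset.univ.sup fun k => γ j k ⊓ δ k l)
        = Finset.univ.sup fun k => Finset.univ.sup fun j => γ j k ⊓ δ k l :=
          Finset.sup_comm _ _ _
      _ = Finset.univ.sup fun k => (Finset.univ.sup fun j => γ j k) ⊓ δ k l := by
          apply Finset.sup_congr rfl
          intro k _
          exact (Finset.sup_inf_distrib_right _ _ _).symm
      _ = Finset.univ.sup fun k => δ k l := by
          apply Finset.sup_congr rfl
          intro k _
          rw [hγ.2 k]
          exact inf_eq_right.mpr (cm_entry_le_row hδ k l)
      _ = (lam3 l : WithBot ℝ) := hδ.2 l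

lemma comp_ne_bot {γ : Fin n1 → Fin n2 → WithBot ℝ} {δ : Fin n2 → Fin n3 → WithBot ℝ}
    {j : Fin n1} {l : Fin n3}
    (h : (Finset.univ.sup fun k => γ j k ⊓ δ k l) ≠ ⊥) :
    ∃ k, γ j k ≠ ⊥ ∧ δ k l ≠ ⊥ := by
  by_contra hc
  push_neg at hc
  apply h
  rw [Finset.sup_eq_bot_iff]
  intro k _
  rcases eq_or_ne (γ j k) ⊥ with hb | hb
  · rw [hb]; exact bot_inf_eq _
  · rw [hc k hb]; exact inf_bot_eq _

lemma matCost_comp [MetricSpace X] {x1 : Fin n1 → X} {lam1 : Fin n1 → ℝ}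
    {x2 : Fin n2 → X} {lam2 : Fin n2 → ℝ} {x3 : Fin n3 → X} {lam3 : Fin n3 → ℝ}
    {γ : Fin n1 → Fin n2 → WithBot ℝ} {δ : Fin n2 → Fin n3 → WithBot ℝ}
    (hγ : IsCouplingMatrix lam1 lam2 γ) (hδ : IsCouplingMatrix lam2 lam3 δ)
    (hn1 : 0 < n1) (hn2 : 0 < n2) :
    matCost x1 lam1 x3 lam3 (fun j l => Finset.univ.sup fun k => γ j k ⊓ δ k l) ≤
      matCost x1 lam1 x2 lam2 γ + matCost x2 lam2 x3 lam3 δ := by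
  apply Real.sSup_le
  · rintro c ⟨j, l, hne, rfl⟩
    obtain ⟨k, hγk, hδk⟩ := comp_ne_bot hne
    have p1 := pair_le_matCost (x1 := x1) (lam1 := lam1) (x2 := x2) (lam2 := lam2) hγk
    have p2 := pair_le_matCost (x1 := x2) (lam1 := lam2) (x2 := x3) (lam2 := lam3) hδk
    have habs : |lam3 l - lam1 j| ≤ |lam3 l - lam2 k| + |lam2 k - lam1 j| :=
      abs_sub_le (lam3 l) (lam2 k) (lam1 j)
    have hd := dist_triangle (x1 j) (x2 k) (x3 l)
    linarith
  · exact add_nonneg (matCost_nonneg hγ hn1) (matCost_nonneg hδ hn2)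

/-- The diagonal coupling matrix. -/
lemma cm_diag [DecidableEq (Fin n)] {lam : Fin n → ℝ} :
    IsCouplingMatrix lam lam
      (fun j k => if j = k then (lam j : WithBot ℝ) else ⊥) := by
  constructor
  · intro j
    apply le_antisymm
    · apply Finset.sup_le
      intro k _
      dsimp only
      split
      · next h => exact le_refl _
      · exact bot_le
    · have : (if j = j then (lam j : WithBot ℝ) else ⊥) = (lam j : WithBot ℝ) := if_pos rfl
      rw [← this]
      exact Finset.le_sup (f := fun k => if j = k then (lam j : WithBot ℝ) else ⊥)
        (Finset.mem_univ j)
  · intro k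
    apply le_antisymm
    · apply Finset.sup_le
      intro j _
      dsimp only
      split
      · next h => subst h; exact le_refl _
      · exact bot_le
    · have : (if k = k then (lam k : WithBot ℝ) else ⊥) = (lam k : WithBot ℝ) := if_pos rfl
      rw [← this]
      exact Finset.le_sup (f := fun j => if j = k then (lam j : WithBot ℝ) else ⊥)
        (Finset.mem_univ k)

lemma matCost_diag [MetricSpace X] [DecidableEq (Fin n)] {x : Fin n → X}
    {lam : Fin n → ℝ} (hn : 0 < n) :
    matCost x lam x lam (fun j k => if j = k then (lam j : WithBot ℝ) else ⊥) = 0 := by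
  unfold matCost
  have : {c : ℝ | ∃ j k, (if j = k then (lam j : WithBot ℝ) else ⊥) ≠ ⊥ ∧
      c = |lam k - lam j| + dist (x j) (x k)} = {0} := by
    ext c
    constructor
    · rintro ⟨j, k, hne, rfl⟩
      have hjk : j = k := by
        by_contra hc
        exact hne (if_neg hc)
      subst hjk
      simp
    · rintro rfl
      refine ⟨⟨0, hn⟩, ⟨0, hn⟩, ?_, by simp⟩
      rw [if_pos rfl]
      exact WithBot.coe_ne_bot
  rw [this, csSup_singleton]

/-- The "identity" cost-zero coupling matrix between the weights of two
representations of the same functional. -/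
lemma cm_link [MetricSpace X] [DecidableEq X] {μ : C(X, ℝ) → ℝ} {x : Fin n → X}
    {lam : Fin n → ℝ} {y : Fin m → X} {mu : Fin m → ℝ}
    (h2 : IsRepr μ x lam) (h2' : IsRepr μ y mu) :
    IsCouplingMatrix lam mu (fun k k' =>
      if x k = y k' ∧ lam k = mu k' then (lam k : WithBot ℝ) else ⊥) := by
  classical
  constructor
  · intro k
    apply le_antisymm
    · apply Finset.sup_le
      intro k' _
      dsimp only
      split
      · exact le_refl _
      · exact bot_le
    · obtain ⟨k', hk'1, hk'2⟩ := isRepr_match h2 h2' k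
      have : (if x k = y k' ∧ lam k = mu k' then (lam k : WithBot ℝ) else ⊥)
          = (lam k : WithBot ℝ) := if_pos ⟨hk'1.symm, hk'2.symm⟩
      rw [← this]
      exact Finset.le_sup (f := fun k' =>
        if x k = y k' ∧ lam k = mu k' then (lam k : WithBot ℝ) else ⊥) (Finset.mem_univ k')
  · intro k'
    apply le_antisymm
    · apply Finset.sup_le
      intro k _
      dsimp only
      split
      · next h => rw [h.2]
      · exact bot_le
    · obtain ⟨k, hk1, hk2⟩ := isRepr_match h2' h2 k'
      have : (if x k = y k' ∧ lam k = mu k' then (lam k : WithBot ℝ) else ⊥)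
          = (mu k' : WithBot ℝ) := by rw [if_pos ⟨hk1, hk2⟩, hk2]
      rw [← this]
      exact Finset.le_sup (f := fun k =>
        if x k = y k' ∧ lam k = mu k' then (lam k : WithBot ℝ) else ⊥) (Finset.mem_univ k)

lemma matCost_link [MetricSpace X] [DecidableEq X] {μ : C(X, ℝ) → ℝ} {x : Fin n → X}
    {lam : Fin n → ℝ} {y : Fin m → X} {mu : Fin m → ℝ}
    (h2 : IsRepr μ x lam) (h2' : IsRepr μ y mu) :
    matCost x lam y mu (fun k k' =>
      if x k = y k' ∧ lam k = mu k' then (lam k : WithBot ℝ) else ⊥) = 0 := by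
  classical
  apply le_antisymm
  · apply Real.sSup_le _ le_rfl
    rintro c ⟨k, k', hne, rfl⟩
    have hcond : x k = y k' ∧ lam k = mu k' := by
      by_contra hc
      exact hne (if_neg hc)
    rw [hcond.2, sub_self, abs_zero, hcond.1, dist_self, add_zero]
  · apply Real.sSup_nonneg'
    obtain ⟨k', hk'1, hk'2⟩ := isRepr_match h2 h2' ⟨0, h2.1⟩
    refine ⟨|mu k' - lam ⟨0, h2.1⟩| + dist (x ⟨0, h2.1⟩) (y k'), ⟨⟨0, h2.1⟩, k', ?_, rfl⟩, ?_⟩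
    · dsimp only
      rw [if_pos ⟨hk'1.symm, hk'2.symm⟩]
      exact WithBot.coe_ne_bot
    · positivity

/-! ### The set defining `Hdist` -/

/-- The set of costs over which `Hdist` takes the infimum. -/
def HSet [MetricSpace X] (μ1 μ2 : C(X, ℝ) → ℝ) : Set ℝ :=
  {c : ℝ | ∃ (n1 n2 : ℕ) (x1 : Fin n1 → X) (lam1 : Fin n1 → ℝ)
      (x2 : Fin n2 → X) (lam2 : Fin n2 → ℝ) (γ : Fin n1 → Fin n2 → WithBot ℝ),
      IsRepr μ1 x1 lam1 ∧ IsRepr μ2 x2 lam2 ∧ IsCouplingMatrix lam1 lam2 γ ∧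
      c = matCost x1 lam1 x2 lam2 γ}

lemma Hdist_eq [MetricSpace X] (μ1 μ2 : C(X, ℝ) → ℝ) :
    Hdist μ1 μ2 = sInf (HSet μ1 μ2) := rfl

lemma HSet_nonneg [MetricSpace X] {μ1 μ2 : C(X, ℝ) → ℝ} :
    ∀ c ∈ HSet μ1 μ2, 0 ≤ c := by
  rintro c ⟨n1, n2, x1, lam1, x2, lam2, γ, h1, h2, hcm, rfl⟩
  exact matCost_nonneg hcm h1.1

lemma HSet_bddBelow [MetricSpace X] {μ1 μ2 : C(X, ℝ) → ℝ} :
    BddBelow (HSet μ1 μ2) :=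
  ⟨0, fun c hc => HSet_nonneg c hc⟩

lemma HSet_nonempty [MetricSpace X] {μ1 μ2 : C(X, ℝ) → ℝ}
    (hf1 : IsFinSuppIPM μ1) (hf2 : IsFinSuppIPM μ2) : (HSet μ1 μ2).Nonempty := by
  obtain ⟨n1, x1, lam1, h1⟩ := hf1
  obtain ⟨n2, x2, lam2, h2⟩ := hf2
  exact ⟨matCost x1 lam1 x2 lam2 (fun j k => ((lam1 j + lam2 k : ℝ) : WithBot ℝ)),
    n1, n2, x1, lam1, x2, lam2, _, h1, h2,
    cm_prod (isRepr_exists_lam_zero h1) (isRepr_exists_lam_zero h2)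
      (isRepr_lam_nonpos h1) (isRepr_lam_nonpos h2), rfl⟩

lemma Hdist_le_matCost [MetricSpace X] {μ1 μ2 : C(X, ℝ) → ℝ}
    {x1 : Fin n1 → X} {lam1 : Fin n1 → ℝ} {x2 : Fin n2 → X} {lam2 : Fin n2 → ℝ}
    {γ : Fin n1 → Fin n2 → WithBot ℝ}
    (h1 : IsRepr μ1 x1 lam1) (h2 : IsRepr μ2 x2 lam2)
    (hcm : IsCouplingMatrix lam1 lam2 γ) :
    Hdist μ1 μ2 ≤ matCost x1 lam1 x2 lam2 γ :=
  csInf_le HSet_bddBelow ⟨n1, n2, x1, lam1, x2, lam2, γ, h1, h2, hcm, rfl⟩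

lemma HSet_symm [MetricSpace X] (μ1 μ2 : C(X, ℝ) → ℝ) :
    HSet μ1 μ2 = HSet μ2 μ1 := by
  ext c
  constructor
  · rintro ⟨n1, n2, x1, lam1, x2, lam2, γ, h1, h2, hcm, rfl⟩
    exact ⟨n2, n1, x2, lam2, x1, lam1, fun k j => γ j k, h2, h1, cm_transpose hcm,
      (matCost_transpose γ).symm⟩
  · rintro ⟨n1, n2, x1, lam1, x2, lam2, γ, h1, h2, hcm, rfl⟩
    exact ⟨n2, n1, x2, lam2, x1, lam1, fun k j => γ j k, h2, h1, cm_transpose hcm,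
      (matCost_transpose γ).symm⟩

/-- One half of the separation property. -/
lemma le_of_Hdist_zero [MetricSpace X] [CompactSpace X] {μ1 μ2 : C(X, ℝ) → ℝ}
    (hf1 : IsFinSuppIPM μ1) (hf2 : IsFinSuppIPM μ2)
    (h0 : Hdist μ1 μ2 = 0) (φ : C(X, ℝ)) : μ1 φ ≤ μ2 φ := by
  apply le_of_forall_pos_le_add
  intro ε hε
  obtain ⟨δ, hδ0, hδ⟩ := Metric.uniformContinuous_iff.mp
    (CompactSpace.uniformContinuous_of_continuous φ.continuous) (ε / 2) (by linarith)
  set M : ℝ := min δ (ε / 2) with hM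
  have hM0 : 0 < M := lt_min hδ0 (by linarith)
  obtain ⟨c, hc, hclt⟩ := exists_lt_of_csInf_lt (HSet_nonempty hf1 hf2)
    (show sInf (HSet μ1 μ2) < M by rw [← Hdist_eq, h0]; exact hM0)
  obtain ⟨n1, n2, x1, lam1, x2, lam2, γ, h1, h2, hcm, rfl⟩ := hc
  apply isRepr_le h1
  intro j
  obtain ⟨k, hk⟩ := cm_row_ne_bot hcm j
  have hp := pair_le_matCost (x1 := x1) (lam1 := lam1) (x2 := x2) (lam2 := lam2) hk
  have habs : |lam2 k - lam1 j| + dist (x1 j) (x2 k) < M := lt_of_le_of_lt hp hclt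
  have hd : dist (x1 j) (x2 k) < δ := by
    have h1' := abs_nonneg (lam2 k - lam1 j)
    have h2' := min_le_left δ (ε / 2)
    linarith
  have hl : |lam2 k - lam1 j| < ε / 2 := by
    have h1' := dist_nonneg (x := x1 j) (y := x2 k)
    have h2' := min_le_right δ (ε / 2)
    linarith
  have hφd : |φ (x1 j) - φ (x2 k)| < ε / 2 := by
    have := hδ hd
    rwa [Real.dist_eq] at this
  have hterm := isRepr_term_le h2 φ k
  have hl' := abs_lt.mp hl
  have hφd' := abs_lt.mp hφd
  linarith [hl'.1, hl'.2, hφd'.1, hφd'.2]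

end Auxiliary

/-- Proposition 1: `H` is a metric on the set of finitely supported
idempotent probability measures. -/
theorem stmt8 [MetricSpace X] [CompactSpace X] :
    (∀ μ1 μ2 : C(X, ℝ) → ℝ, IsFinSuppIPM μ1 → IsFinSuppIPM μ2 →
      0 ≤ Hdist μ1 μ2) ∧
    (∀ μ1 μ2 : C(X, ℝ) → ℝ, IsFinSuppIPM μ1 → IsFinSuppIPM μ2 →
      (Hdist μ1 μ2 = 0 ↔ μ1 = μ2)) ∧
    (∀ μ1 μ2 : C(X, ℝ) → ℝ, IsFinSuppIPM μ1 → IsFinSuppIPM μ2 →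
      Hdist μ1 μ2 = Hdist μ2 μ1) ∧
    (∀ μ1 μ2 μ3 : C(X, ℝ) → ℝ, IsFinSuppIPM μ1 → IsFinSuppIPM μ2 → IsFinSuppIPM μ3 →
      Hdist μ1 μ3 ≤ Hdist μ1 μ2 + Hdist μ2 μ3) := by
  classical
  have hnonneg : ∀ μ1 μ2 : C(X, ℝ) → ℝ, 0 ≤ Hdist μ1 μ2 := by
    intro μ1 μ2
    rw [Hdist_eq]
    exact Real.sInf_nonneg HSet_nonneg
  refine ⟨fun μ1 μ2 _ _ => hnonneg μ1 μ2, ?_, ?_, ?_⟩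
  · -- separation
    intro μ1 μ2 hf1 hf2
    constructor
    · intro h0
      funext φ
      have h0' : Hdist μ2 μ1 = 0 := by
        rw [Hdist_eq, ← HSet_symm, ← Hdist_eq, h0]
      exact le_antisymm (le_of_Hdist_zero hf1 hf2 h0 φ)
        (le_of_Hdist_zero hf2 hf1 h0' φ)
    · rintro rfl
      apply le_antisymm _ (hnonneg μ1 μ1)
      obtain ⟨n, x, lam, h1⟩ := hf1
      calc Hdist μ1 μ1 ≤ matCost x lam x lam
            (fun j k => if j = k then (lam j : WithBot ℝ) else ⊥) :=
            Hdist_le_matCost h1 h1 cm_diag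
        _ = 0 := matCost_diag h1.1
  · -- symmetry
    intro μ1 μ2 _ _
    rw [Hdist_eq, Hdist_eq, HSet_symm]
  · -- triangle inequality
    intro μ1 μ2 μ3 hf1 hf2 hf3
    have key : ∀ c12 ∈ HSet μ1 μ2, ∀ c23 ∈ HSet μ2 μ3, Hdist μ1 μ3 ≤ c12 + c23 := by
      rintro c12 ⟨n1, n2, x1, lam1, x2, lam2, γ, h1, h2, hγ, rfl⟩
        c23 ⟨m2, m3, y2, mu2, x3, lam3, δ, h2', h3, hδ, rfl⟩
      set γ0 : Fin n2 → Fin m2 → WithBot ℝ := fun k k' =>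
        if x2 k = y2 k' ∧ lam2 k = mu2 k' then (lam2 k : WithBot ℝ) else ⊥ with hγ0def
      have hγ0 : IsCouplingMatrix lam2 mu2 γ0 := cm_link h2 h2'
      have hγ0cost : matCost x2 lam2 y2 mu2 γ0 = 0 := matCost_link h2 h2'
      set η1 : Fin n1 → Fin m2 → WithBot ℝ :=
        fun j k' => Finset.univ.sup fun k => γ j k ⊓ γ0 k k' with hη1def
      have hη1 : IsCouplingMatrix lam1 mu2 η1 := cm_comp hγ hγ0
      have hη1cost : matCost x1 lam1 y2 mu2 η1 ≤
          matCost x1 lam1 x2 lam2 γ + matCost x2 lam2 y2 mu2 γ0 :=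
        matCost_comp hγ hγ0 h1.1 h2.1
      set η : Fin n1 → Fin m3 → WithBot ℝ :=
        fun j l => Finset.univ.sup fun k' => η1 j k' ⊓ δ k' l with hηdef
      have hη : IsCouplingMatrix lam1 lam3 η := cm_comp hη1 hδ
      have hηcost : matCost x1 lam1 x3 lam3 η ≤
          matCost x1 lam1 y2 mu2 η1 + matCost y2 mu2 x3 lam3 δ :=
        matCost_comp hη1 hδ h1.1 h2'.1
      calc Hdist μ1 μ3 ≤ matCost x1 lam1 x3 lam3 η := Hdist_le_matCost h1 h3 hη
        _ ≤ matCost x1 lam1 x2 lam2 γ + matCost y2 mu2 x3 lam3 δ := by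
            rw [hγ0cost] at hη1cost
            linarith
    have hne12 := HSet_nonempty hf1 hf2
    have hne23 := HSet_nonempty hf2 hf3
    have step1 : ∀ c12 ∈ HSet μ1 μ2, Hdist μ1 μ3 - c12 ≤ sInf (HSet μ2 μ3) :=
      fun c12 h12 => le_csInf hne23 (fun c23 h23 => by linarith [key c12 h12 c23 h23])
    have step2 : Hdist μ1 μ3 - sInf (HSet μ2 μ3) ≤ sInf (HSet μ1 μ2) :=
      le_csInf hne12 (fun c12 h12 => by linarith [step1 c12 h12])
    rw [Hdist_eq μ1 μ2, Hdist_eq μ2 μ3]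
    linarith
end
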